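/- arXiv:2201.12869 — 2 statements merged into one kernel-verified Lean document; each statement's English description precedes it below -/
import Mathlib

section
/- Every multi-demand market with strictly positive item valuations admits rough prices: there exists a price vector p ∈ ℝ^X with p_x > 0 for all x such that for every player i: (1) for all x ∈ R_i and y ∉ R_i, v_i(x) − p_x > v_i(y) − p_y; (2) for all x, y ∈ K_i ∖ R_i, v_i(x) − p_x = v_i(y) − p_y; and (3) for all x ∈ K_i and y ∉ K_i, v_i(x) − p_x > v_i(y) − p_y. -/
open Finset

/-- The value of a bundle `S` for a player with demand `k` and item valuations `v`:
the maximum, over subsets `T ⊆ S` with `|T| ≤ k`, of the total value of `T`. -/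
noncomputable def bundleValue {X : Type*} [DecidableEq X] (k : ℕ) (v : X → ℝ)
    (S : Finset X) : ℝ :=
  ((S.powerset.filter (fun T => T.card ≤ k)).image (fun T => ∑ x ∈ T, v x)).max'
    (Finset.Nonempty.image ⟨∅, by simp⟩ _)

/-- An allocation: a partition of the items where player `i` gets exactly `k i` items. -/
def IsAllocation {X I : Type*} (k : I → ℕ) (O : I → Finset X) : Prop :=
  (∀ i, (O i).card = k i) ∧ (∀ x : X, ∃! i, x ∈ O i)

/-- Social welfare of an allocation. -/
noncomputable def socialWelfare {X I : Type*} [DecidableEq X] [Fintype I]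
    (v : I → X → ℝ) (k : I → ℕ) (O : I → Finset X) : ℝ :=
  ∑ i, bundleValue (k i) (v i) (O i)

/-- An optimal allocation: an allocation maximizing social welfare. -/
def IsOptimal {X I : Type*} [DecidableEq X] [Fintype I]
    (v : I → X → ℝ) (k : I → ℕ) (O : I → Finset X) : Prop :=
  IsAllocation k O ∧
    ∀ O' : I → Finset X, IsAllocation k O' → socialWelfare v k O' ≤ socialWelfare v k O


/-- An item `x` is legal to player `i`: some optimal allocation assigns `x` to `i`. -/
def LegalItem {X I : Type*} [DecidableEq X] [Fintype I]
    (v : I → X → ℝ) (k : I → ℕ) (i : I) (x : X) : Prop :=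
  ∃ O : I → Finset X, IsOptimal v k O ∧ x ∈ O i

/-- An item `x` belongs to `R_i`: it is assigned to `i` in every optimal allocation. -/
def AlwaysItem {X I : Type*} [DecidableEq X] [Fintype I]
    (v : I → X → ℝ) (k : I → ℕ) (i : I) (x : X) : Prop :=
  ∀ O : I → Finset X, IsOptimal v k O → x ∈ O i

/-!
Fix an optimal assignment `a` and let `L i j` be the least loss `v i x - v j x` over the items `x`
of player `i`. Passing one item along each cycle of a permutation `σ` of the players changes the
welfare by `-∑ i, L i (σ i)`, so these sums are nonnegative; hence the weights of shortest simple
paths give potentials `d` with `d j - d i ≤ L i j`. At the prices `p x = v (a x) x + d (a x)` every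
player's utility is at most `-d i`, with equality on the items it receives in some optimal
assignment. Running this with the values of the pairs used by no optimal assignment raised by a
small `ε` makes the inequality strict there. A discount of `ε / 2` on the items with a fixed owner
and a common shift making all prices positive then give rough prices.
-/

open Filter Topology

theorem exists_pos_add_le_of_lt {α : Type*} [Finite α] (f : α → ℝ) (M : ℝ) :
    ∃ δ > 0, ∀ b, f b < M → f b + δ ≤ M := by
  have hsmall : ∀ᶠ δ in 𝓝[>] (0 : ℝ), ∀ b, f b < M → f b + δ ≤ M :=
    eventually_all.2 fun b => by
      by_cases hb : f b < M
      · filter_upwards [nhdsWithin_le_nhds (ge_mem_nhds (sub_pos.2 hb))] with δ hδ _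
        linarith
      · exact .of_forall fun _ h => absurd h hb
  obtain ⟨δ, hδ, hpos⟩ := (hsmall.and self_mem_nhdsWithin).exists
  exact ⟨δ, hpos, hδ⟩

lemma bundleValue_eq_sum {X : Type*} [DecidableEq X] {k : ℕ} {w : X → ℝ} (hw : ∀ x, 0 ≤ w x)
    {S : Finset X} (hS : #S ≤ k) :
    bundleValue k w S = ∑ x ∈ S, w x := by
  refine le_antisymm (max'_le _ _ _ fun b hb => ?_) (le_max' _ _ ?_)
  · simp only [mem_image, mem_filter, mem_powerset] at hb
    obtain ⟨T, ⟨hTS, -⟩, rfl⟩ := hb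
    exact sum_le_sum_of_subset_of_nonneg hTS fun x _ _ => hw x
  · exact mem_image.2 ⟨S, mem_filter.2 ⟨mem_powerset_self S, hS⟩, rfl⟩

section Potential

variable {V : Type*}

def walkWeight (w : V → V → ℝ) : List V → ℝ
  | u :: u' :: l => w u u' + walkWeight w (u' :: l)
  | _ => 0

variable (w : V → V → ℝ)

lemma walkWeight_append (l₁ l₂ : List V) (u : V) :
    walkWeight w (l₁ ++ u :: l₂) = walkWeight w (l₁ ++ [u]) + walkWeight w (u :: l₂) := by
  induction l₁ with
  | nil => simp [walkWeight]
  | cons x l ih => cases l <;> simp_all [walkWeight, add_assoc]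

lemma walkWeight_append_pair (l : List V) (i j : V) :
    walkWeight w (l ++ [i, j]) = walkWeight w (l ++ [i]) + w i j := by
  simp [walkWeight_append w l [j] i, walkWeight]

lemma walkWeight_eq_sum_zipWith (l : List V) :
    walkWeight w l = (List.zipWith w l l.tail).sum := by
  induction l with
  | nil => rfl
  | cons x l ih => cases l <;> simp_all [walkWeight]

variable [DecidableEq V] [Fintype V]

lemma sum_apply_formPerm_eq_walkWeight (hdiag : ∀ u, w u u = 0) {j : V} {l : List V}
    (hl : (j :: l).Nodup) :
    ∑ u, w u ((j :: l).formPerm u) = walkWeight w (j :: l ++ [j]) := by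
  rw [← sum_subset (subset_univ (j :: l).toFinset), List.sum_toFinset _ hl,
    walkWeight_eq_sum_zipWith]
  · congr 1
    refine List.ext_getElem (by simp) fun t h₁ h₂ => ?_
    simp only [List.getElem_map, List.getElem_zipWith, List.formPerm_apply_getElem _ hl]
    have ht : t < (j :: l).length := by simpa using h₁
    have hprefix : (j :: (l ++ [j]))[t]'(by simp at ht ⊢; omega) = (j :: l)[t] :=
      List.getElem_append_left (as := j :: l) (bs := [j]) ht
    rcases Nat.lt_or_ge t l.length with hlt | hge
    · simp [hprefix, Nat.mod_eq_of_lt (by simpa using hlt : t + 1 < l.length + 1),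
        List.getElem_append_left hlt]
    · obtain rfl : t = l.length := by simp at ht; omega
      simp [hprefix]
  · intro u _ hu
    rw [List.formPerm_apply_of_notMem (by simpa using hu), hdiag]

theorem exists_potential (hdiag : ∀ u, w u u = 0)
    (hperm : ∀ σ : Equiv.Perm V, 0 ≤ ∑ u, w u (σ u)) :
    ∃ d : V → ℝ, ∀ i j, d j - d i ≤ w i j := by
  let paths (j : V) : Finset {l : List V // l.Nodup} := {l | j ∉ l.1}
  have hpaths (j : V) : (paths j).Nonempty := ⟨⟨[], List.nodup_nil⟩, by simp [paths]⟩
  let d (j : V) : ℝ := (paths j).inf' (hpaths j) fun l => walkWeight w (l.1 ++ [j])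
  have hd {j : V} {l : List V} (hl : l.Nodup) (hj : j ∉ l) : d j ≤ walkWeight w (l ++ [j]) :=
    inf'_le (fun l : {l // List.Nodup l} => walkWeight w (l.1 ++ [j]))
      (b := ⟨l, hl⟩) (by simpa [paths] using hj)
  refine ⟨d, fun i j => ?_⟩
  obtain ⟨⟨l, hl⟩, hli, hdi⟩ := exists_mem_eq_inf' (hpaths i) fun l => walkWeight w (l.1 ++ [i])
  simp only [paths, mem_filter, mem_univ, true_and] at hli
  change d i = _ at hdi
  by_cases hji : j = i
  · simp [hji, hdiag]
  by_cases hjl : j ∈ l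
  · obtain ⟨A, B, rfl⟩ := List.append_of_mem hjl
    obtain ⟨hA, hjB, hAB⟩ := List.nodup_append.1 hl
    have hcycle : (j :: (B ++ [i])).Nodup := by
      simpa using hjB.concat fun h => hli (by simp_all)
    have hjA : d j ≤ walkWeight w (A ++ [j]) :=
      hd hA fun h => hAB j h j (by simp) rfl
    have hsplit : walkWeight w (A ++ j :: B ++ [i]) =
        walkWeight w (A ++ [j]) + walkWeight w (j :: (B ++ [i])) := by
      simpa using walkWeight_append w A (B ++ [i]) j
    have hclose : walkWeight w (j :: (B ++ [i]) ++ [j]) =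
        walkWeight w (j :: (B ++ [i])) + w i j := by
      simpa using walkWeight_append_pair w (j :: B) i j
    have hcycle_nonneg := sum_apply_formPerm_eq_walkWeight w hdiag hcycle ▸
      hperm (j :: (B ++ [i])).formPerm
    linarith
  · have hext := hd (by simpa using hl.concat hli) (by simp [hjl, hji] : j ∉ l ++ [i])
    rw [List.append_assoc, List.singleton_append, walkWeight_append_pair] at hext
    linarith

end Potential

section Assignment

variable {X I : Type*} [Fintype X] [DecidableEq I]

def bundles (a : X → I) (i : I) : Finset X := {x | a x = i}

@[simp] lemma mem_bundles {a : X → I} {i : I} {x : X} : x ∈ bundles a i ↔ a x = i := by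
  simp [bundles]

def IsAssignment (k : I → ℕ) (a : X → I) : Prop := ∀ i, #(bundles a i) = k i

def assignmentWelfare (v : I → X → ℝ) (a : X → I) : ℝ := ∑ x, v (a x) x

def IsOptimalAssignment (v : I → X → ℝ) (k : I → ℕ) (a : X → I) : Prop :=
  IsAssignment k a ∧ ∀ b, IsAssignment k b → assignmentWelfare v b ≤ assignmentWelfare v a

variable {k : I → ℕ} {v : I → X → ℝ} {a : X → I}

lemma IsAssignment.comp_perm (ha : IsAssignment k a) (π : Equiv.Perm X) :
    IsAssignment k (a ∘ π) := by
  intro i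
  rw [← ha i]
  exact card_nbij' π π.symm (fun x hx => by simpa using hx) (fun x hx => by simpa using hx)
    (fun x _ => by simp) (fun x _ => by simp)

lemma IsAssignment.bundles_nonempty (ha : IsAssignment k a) (hk : ∀ i, 1 ≤ k i) (i : I) :
    (bundles a i).Nonempty := by
  rw [← card_pos, ha i]
  exact hk i

lemma IsAssignment.isAllocation (ha : IsAssignment k a) :
    IsAllocation k (bundles a) :=
  ⟨ha, fun x => ⟨a x, by simp, fun i h => (mem_bundles.1 h).symm⟩⟩

lemma IsAllocation.exists_eq_bundles {O : I → Finset X} (hO : IsAllocation k O) :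
    ∃ a, IsAssignment k a ∧ O = bundles a := by
  choose a ha hu using hO.2
  have hOa : O = bundles a :=
    funext fun i => ext fun x => ⟨fun hx => (hu x i hx).symm ▸ mem_bundles.2 rfl,
      fun hx => mem_bundles.1 hx ▸ ha x⟩
  exact ⟨a, fun i => hOa ▸ hO.1 i, hOa⟩

noncomputable def exchangeCost (v : I → X → ℝ) (a : X → I) (hne : ∀ i, (bundles a i).Nonempty)
    (i j : I) : ℝ :=
  (bundles a i).inf' (hne i) fun x => v i x - v j x

variable [Fintype I]

lemma sum_exchangeCost_nonneg (ha : IsOptimalAssignment v k a)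
    (hne : ∀ i, (bundles a i).Nonempty) (σ : Equiv.Perm I) :
    0 ≤ ∑ i, exchangeCost v a hne i (σ i) := by
  classical
  have hitem (i : I) : ∃ x, a x = i ∧ v i x - v (σ i) x = exchangeCost v a hne i (σ i) := by
    obtain ⟨x, hx, hmin⟩ := exists_mem_eq_inf' (hne i) fun x => v i x - v (σ i) x
    exact ⟨x, mem_bundles.1 hx, hmin.symm⟩
  choose y hya hy using hitem
  have hinj : Function.Injective y := Function.LeftInverse.injective hya
  let π : Equiv.Perm X := σ.extendDomain (Equiv.ofInjective y hinj)
  have hπ (i : I) : π (y i) = y (σ i) := by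
    simpa using σ.extendDomain_apply_image (Equiv.ofInjective y hinj) i
  have hgain : assignmentWelfare v (a ∘ π) - assignmentWelfare v a =
      -∑ i, exchangeCost v a hne i (σ i) := by
    rw [assignmentWelfare, assignmentWelfare, ← sum_sub_distrib, ← sum_neg_distrib]
    refine (Fintype.sum_of_injective y hinj _ _ (fun x hx => ?_) fun i => ?_).symm
    · simp [π, σ.extendDomain_apply_not_subtype _ hx]
    · simp [hπ, hya, ← hy]
  linarith [ha.2 _ (ha.1.comp_perm π)]

/-- `(p, u)` solves the dual of the assignment linear program and is complementary to `a`. -/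
def IsSupporting (v : I → X → ℝ) (a : X → I) (p : X → ℝ) (u : I → ℝ) : Prop :=
  (∀ i x, v i x - p x ≤ u i) ∧ ∀ x, v (a x) x - p x = u (a x)

theorem IsOptimalAssignment.exists_isSupporting (ha : IsOptimalAssignment v k a)
    (hk : ∀ i, 1 ≤ k i) : ∃ p u, IsSupporting v a p u := by
  have hne := ha.1.bundles_nonempty hk
  obtain ⟨d, hd⟩ := exists_potential (exchangeCost v a hne)
    (fun i => by simp [exchangeCost]) (sum_exchangeCost_nonneg ha hne)
  refine ⟨fun x => v (a x) x + d (a x), fun i => -d i, fun i x => ?_, fun x => by ring⟩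
  have hcost : exchangeCost v a hne (a x) i ≤ v (a x) x - v i x :=
    inf'_le (fun y => v (a x) y - v i y) (mem_bundles.2 rfl)
  linarith [hd (a x) i]

lemma IsAssignment.sum_comp (ha : IsAssignment k a) (f : I → ℝ) :
    ∑ x, f (a x) = ∑ i, k i * f i := by
  rw [← sum_fiberwise univ a]
  refine sum_congr rfl fun i _ => ?_
  rw [← ha i, ← nsmul_eq_mul, ← sum_const]
  exact sum_congr rfl fun x hx => by rw [(mem_filter.1 hx).2]

theorem IsSupporting.of_isOptimalAssignment {p : X → ℝ} {u : I → ℝ} {b : X → I}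
    (h : IsSupporting v a p u) (ha : IsOptimalAssignment v k a)
    (hb : IsOptimalAssignment v k b) : IsSupporting v b p u := by
  refine ⟨h.1, ?_⟩
  have hle (x : X) : v (b x) x ≤ p x + u (b x) := by linarith [h.1 (b x) x]
  have hdual : ∑ x, (p x + u (b x)) = assignmentWelfare v a := by
    rw [assignmentWelfare, sum_add_distrib, hb.1.sum_comp, ← ha.1.sum_comp, ← sum_add_distrib]
    exact sum_congr rfl fun x _ => by linarith [h.2 x]
  have heq : assignmentWelfare v b = ∑ x, (p x + u (b x)) :=
    le_antisymm (sum_le_sum fun x _ => hle x) (hdual ▸ hb.2 a ha.1)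
  intro x
  linarith [(sum_eq_sum_iff_of_le fun x _ => hle x).1 heq x (mem_univ x)]

theorem IsOptimalAssignment.exists_isSupporting_strict (ha : IsOptimalAssignment v k a)
    (hk : ∀ i, 1 ≤ k i) :
    ∃ p u, ∃ ε > 0, IsSupporting v a p u ∧
      ∀ i x, (∀ b, IsOptimalAssignment v k b → b x ≠ i) → v i x - p x + ε ≤ u i := by
  classical
  -- raising the pairs used by no optimal assignment by `ε` keeps `a` optimal, as `|X| ε ≤ δ`
  let Legal (i : I) (x : X) : Prop := ∃ b, IsOptimalAssignment v k b ∧ b x = i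
  obtain ⟨δ, hδ, hgap⟩ := exists_pos_add_le_of_lt (assignmentWelfare v) (assignmentWelfare v a)
  set ε := δ / (Fintype.card X + 1) with hε
  have hεpos : 0 < ε := by positivity
  have hεδ : Fintype.card X * ε ≤ δ := by
    rw [hε, mul_div_assoc', div_le_iff₀ (by positivity)]
    nlinarith
  let v' (i : I) (x : X) : ℝ := v i x + if Legal i x then 0 else ε
  have hv'_opt {b : X → I} (hb : IsOptimalAssignment v k b) :
      assignmentWelfare v' b = assignmentWelfare v b :=
    sum_congr rfl fun x _ => by simp [v', show Legal (b x) x from ⟨b, hb, rfl⟩]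
  have hv'_le (b : X → I) :
      assignmentWelfare v' b ≤ assignmentWelfare v b + Fintype.card X * ε := by
    rw [assignmentWelfare, assignmentWelfare, ← nsmul_eq_mul, ← card_univ, ← sum_const,
      ← sum_add_distrib]
    exact sum_le_sum fun x _ => by simp only [v']; split_ifs <;> linarith
  have ha' : IsOptimalAssignment v' k a := by
    refine ⟨ha.1, fun b hb => ?_⟩
    rw [hv'_opt ha]
    by_cases hopt : assignmentWelfare v b = assignmentWelfare v a
    · rw [hv'_opt ⟨hb, fun c hc => hopt ▸ ha.2 c hc⟩, hopt]
    · linarith [hgap b (lt_of_le_of_ne (ha.2 b hb) hopt), hv'_le b]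
  obtain ⟨p, u, hfeas, htight⟩ := ha'.exists_isSupporting hk
  refine ⟨p, u, ε, hεpos, ⟨fun i x => ?_, fun x => ?_⟩, fun i x hx => ?_⟩
  · have := hfeas i x
    simp only [v'] at this
    split_ifs at this <;> linarith
  · simpa [v', show Legal (a x) x from ⟨a, ha, rfl⟩] using htight x
  · have hx' : ¬ Legal i x := fun ⟨b, hb, hbx⟩ => hx b hb hbx
    have := hfeas i x
    simp only [v', hx', if_false] at this
    linarith

end Assignment

section Market

variable {X I : Type*} [Fintype X] [DecidableEq X] [Fintype I] [DecidableEq I]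
  {k : I → ℕ} {v : I → X → ℝ}

lemma socialWelfare_bundles (hv : ∀ i x, 0 ≤ v i x) {a : X → I} (ha : IsAssignment k a) :
    socialWelfare v k (bundles a) = assignmentWelfare v a := by
  rw [socialWelfare, assignmentWelfare, ← sum_fiberwise univ a]
  refine sum_congr rfl fun i _ => ?_
  rw [bundleValue_eq_sum (hv i) (ha i).le]
  exact sum_congr (by ext; simp) fun x hx => by rw [mem_bundles.1 hx]

lemma isOptimal_bundles_iff (hv : ∀ i x, 0 ≤ v i x) {a : X → I} :
    IsOptimal v k (bundles a) ↔ IsOptimalAssignment v k a := by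
  constructor
  · rintro ⟨ha, hmax⟩
    refine ⟨ha.1, fun b hb => ?_⟩
    simpa [socialWelfare_bundles hv hb, socialWelfare_bundles hv ha.1] using
      hmax _ hb.isAllocation
  · rintro ⟨ha, hmax⟩
    refine ⟨ha.isAllocation, fun O hO => ?_⟩
    obtain ⟨b, hb, rfl⟩ := hO.exists_eq_bundles
    rw [socialWelfare_bundles hv hb, socialWelfare_bundles hv ha]
    exact hmax b hb

lemma legalItem_iff (hv : ∀ i x, 0 ≤ v i x) {i : I} {x : X} :
    LegalItem v k i x ↔ ∃ a, IsOptimalAssignment v k a ∧ a x = i := by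
  constructor
  · rintro ⟨O, hO, hx⟩
    obtain ⟨a, -, rfl⟩ := hO.1.exists_eq_bundles
    exact ⟨a, (isOptimal_bundles_iff hv).1 hO, mem_bundles.1 hx⟩
  · rintro ⟨a, ha, hx⟩
    exact ⟨bundles a, (isOptimal_bundles_iff hv).2 ha, mem_bundles.2 hx⟩

lemma alwaysItem_iff (hv : ∀ i x, 0 ≤ v i x) {i : I} {x : X} :
    AlwaysItem v k i x ↔ ∀ a, IsOptimalAssignment v k a → a x = i := by
  constructor
  · exact fun h a ha => mem_bundles.1 (h _ ((isOptimal_bundles_iff hv).2 ha))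
  · intro h O hO
    obtain ⟨a, -, rfl⟩ := hO.1.exists_eq_bundles
    exact mem_bundles.2 (h a ((isOptimal_bundles_iff hv).1 hO))

lemma IsAllocation.exists_isOptimalAssignment {O : I → Finset X} (hO : IsAllocation k O) :
    ∃ a, IsOptimalAssignment v k a := by
  classical
  obtain ⟨a₀, ha₀, -⟩ := hO.exists_eq_bundles
  obtain ⟨a, ha, hmax⟩ := exists_max_image {a | IsAssignment k a} (assignmentWelfare v)
    ⟨a₀, by simpa using ha₀⟩
  exact ⟨a, (mem_filter.1 ha).2, fun b hb => hmax b (by simpa using hb)⟩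

end Market

theorem exists_rough_prices_of_slack {X I : Type*} [Finite X] {v : I → X → ℝ}
    {Legal Always : I → X → Prop} (p : X → ℝ) (u : I → ℝ) {ε : ℝ} (hε : 0 < ε)
    (hlegal : ∀ i x, Legal i x → v i x - p x = u i)
    (hslack : ∀ i x, ¬ Legal i x → v i x - p x + ε ≤ u i)
    (halways : ∀ i x, Always i x → Legal i x)
    (hunique : ∀ i j x, Legal i x → Always j x → j = i) :
    ∃ q : X → ℝ, (∀ x, 0 < q x) ∧ ∀ i,
      (∀ x y, Always i x → ¬ Always i y → v i y - q y < v i x - q x) ∧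
      (∀ x y, Legal i x → ¬ Always i x → Legal i y → ¬ Always i y →
        v i x - q x = v i y - q y) ∧
      (∀ x y, Legal i x → ¬ Legal i y → v i y - q y < v i x - q x) := by
  classical
  obtain ⟨t, ht⟩ := (eventually_all.2 fun x => eventually_gt_atTop (ε - p x)).exists
  let bonus (x : X) : ℝ := if ∃ j, Always j x then ε / 2 else 0
  have hbonus (x : X) : 0 ≤ bonus x ∧ bonus x ≤ ε / 2 := by
    simp only [bonus]; split_ifs <;> constructor <;> linarith
  have hbonus_always {i : I} {x : X} (hx : Always i x) : bonus x = ε / 2 := if_pos ⟨i, hx⟩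
  have hbonus_legal {i : I} {x : X} (hx : Legal i x) (hnx : ¬ Always i x) : bonus x = 0 :=
    if_neg fun ⟨j, hj⟩ => hnx (hunique i j x hx hj ▸ hj)
  refine ⟨fun x => p x + t - bonus x, fun x => by linarith [ht x, hbonus x], fun i => ⟨?_, ?_, ?_⟩⟩
  · intro x y hx hy
    have hux := hlegal i x (halways i x hx)
    by_cases hly : Legal i y
    · linarith [hlegal i y hly, hbonus_always hx, hbonus_legal hly hy]
    · linarith [hslack i y hly, hbonus_always hx, hbonus y]
  · intro x y hx hnx hy hny
    linarith [hlegal i x hx, hlegal i y hy, hbonus_legal hx hnx, hbonus_legal hy hny]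
  · intro x y hx hy
    linarith [hlegal i x hx, hslack i y hy, hbonus x, hbonus y]

theorem exists_rough_prices_general
    {X I : Type*} [Fintype X] [DecidableEq X] [Fintype I] [DecidableEq I]
    (k : I → ℕ) (hk : ∀ i, 1 ≤ k i)
    (v : I → X → ℝ) (hv : ∀ i x, 0 < v i x)
    (hex : ∃ O : I → Finset X, IsAllocation k O) :
    ∃ p : X → ℝ, (∀ x, 0 < p x) ∧
      ∀ i,
        (∀ x y, AlwaysItem v k i x → ¬ AlwaysItem v k i y →
          v i y - p y < v i x - p x) ∧
        (∀ x y, LegalItem v k i x → ¬ AlwaysItem v k i x →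
          LegalItem v k i y → ¬ AlwaysItem v k i y →
          v i x - p x = v i y - p y) ∧
        (∀ x y, LegalItem v k i x → ¬ LegalItem v k i y →
          v i y - p y < v i x - p x) := by
  have hv₀ : ∀ i x, 0 ≤ v i x := fun i x => (hv i x).le
  obtain ⟨O, hO⟩ := hex
  obtain ⟨a, ha⟩ := hO.exists_isOptimalAssignment (v := v)
  obtain ⟨p, u, ε, hε, hsupp, hslack⟩ := ha.exists_isSupporting_strict hk
  refine exists_rough_prices_of_slack p u hε (fun i x hx => ?_) (fun i x hx => ?_)
    (fun i x hx => ?_) (fun i j x hx hj => ?_)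
  · obtain ⟨b, hb, rfl⟩ := (legalItem_iff hv₀).1 hx
    exact (hsupp.of_isOptimalAssignment ha hb).2 x
  · exact hslack i x fun b hb hbx => hx ((legalItem_iff hv₀).2 ⟨b, hb, hbx⟩)
  · exact (legalItem_iff hv₀).2 ⟨a, ha, (alwaysItem_iff hv₀).1 hx a ha⟩
  · obtain ⟨b, hb, rfl⟩ := (legalItem_iff hv₀).1 hx
    exact ((alwaysItem_iff hv₀).1 hj b hb).symm

/-- Every multi-demand market with strictly positive item valuations admits rough prices. -/
theorem exists_rough_prices
    {X I : Type*} [Fintype X] [DecidableEq X] [Fintype I] [DecidableEq I]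
    (k : I → ℕ) (hk : ∀ i, 1 ≤ k i) (hsum : ∑ i, k i = Fintype.card X)
    (v : I → X → ℝ) (hv : ∀ i x, 0 < v i x)
    (hex : ∃ O : I → Finset X, IsAllocation k O) :
    ∃ p : X → ℝ, (∀ x, 0 < p x) ∧
      ∀ i,
        (∀ x y, AlwaysItem v k i x → ¬ AlwaysItem v k i y →
          v i y - p y < v i x - p x) ∧
        (∀ x y, LegalItem v k i x → ¬ AlwaysItem v k i x →
          LegalItem v k i y → ¬ AlwaysItem v k i y →
          v i x - p x = v i y - p y) ∧
        (∀ x y, LegalItem v k i x → ¬ LegalItem v k i y →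
          v i y - p y < v i x - p x) :=
  exists_rough_prices_general k hk v hv hex
end

section
/- In a simplified market, let X_r be a removable set of type II with respect to a legal allocation O, and let B be the submarket induced by O with item set X ∖ X_r. If a price vector p with 0 < p_x < 1 for all x ∈ X satisfies (1) p_x > p_y for all x ∈ X_r and y ∈ X ∖ X_r, and (2) the restriction of p to X ∖ X_r is a dynamic pricing of B, then p is a dynamic pricing of the market. -/
open Finset

/-- A legal allocation of a simplified market: a partition of the items into bundles
`O i` with `|O i| = k i` and `O i ⊆ 𝓛 i` for every player `i`. -/
def LegalAlloc {X I : Type*} (k : I → ℕ) (L : I → Finset X) (O : I → Finset X) : Prop :=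
  (∀ i, (O i).card = k i) ∧ (∀ x : X, ∃! i, x ∈ O i) ∧ (∀ i, O i ⊆ L i)

/-- In a simplified market, player `i` values an item at `2` if it is legal for `i`
and at `1` otherwise. -/
noncomputable def simpVal {X I : Type*} [DecidableEq X] (L : I → Finset X) (i : I) :
    X → ℝ :=
  fun x => if x ∈ L i then 2 else 1

/-- The bundle `S` is in demand for a player with demand `k`, valuations `v` and
prices `p`: it maximizes utility (value minus total price) over all bundles. -/
def InDemand {X : Type*} [DecidableEq X] (k : ℕ) (v : X → ℝ) (p : X → ℝ)
    (S : Finset X) : Prop :=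
  ∀ S' : Finset X, bundleValue k v S' - ∑ x ∈ S', p x ≤ bundleValue k v S - ∑ x ∈ S, p x

/-- A legal allocation of the submarket induced by the legal allocation `O` with
item set `XB`: a partition of `XB` where player `i` receives `|O i ∩ XB|` items,
all of which are legal for `i`. -/
def SubLegalAlloc {X I : Type*} [DecidableEq X] (L : I → Finset X)
    (O : I → Finset X) (XB : Finset X) (O' : I → Finset X) : Prop :=
  (∀ i, (O' i).card = (O i ∩ XB).card) ∧ (∀ x ∈ XB, ∃! i, x ∈ O' i) ∧
  (∀ i, O' i ⊆ XB) ∧ (∀ i, O' i ⊆ L i)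

/-- The bundle `S ⊆ XB` is in demand in the submarket with item set `XB` for a player
with demand `k`, valuations `v` and prices `p`: it maximizes utility over bundles
contained in `XB`. -/
def SubInDemand {X : Type*} [DecidableEq X] (XB : Finset X) (k : ℕ) (v : X → ℝ)
    (p : X → ℝ) (S : Finset X) : Prop :=
  S ⊆ XB ∧ ∀ S' : Finset X, S' ⊆ XB →
    bundleValue k v S' - ∑ x ∈ S', p x ≤ bundleValue k v S - ∑ x ∈ S, p x

/-- The edge relation of the legality graph `G(O)`: `x → y` iff some player `i`
has `x ∈ O i` and `y ∈ 𝓛 i ∖ O i`. -/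
def LegalityEdge {X I : Type*} (L : I → Finset X) (O : I → Finset X) (x y : X) : Prop :=
  ∃ i, x ∈ O i ∧ y ∈ L i ∧ y ∉ O i

/-- There is a directed path from `x` to `y` in the subgraph of the legality graph
`G(O)` induced on the vertex set `Xr`. -/
def PathInduced {X I : Type*} (L : I → Finset X) (O : I → Finset X) (Xr : Finset X)
    (x y : X) : Prop :=
  ∃ (l : ℕ) (z : Fin (l + 1) → X),
    (∀ j, z j ∈ Xr) ∧ z 0 = x ∧ z (Fin.last l) = y ∧
    ∀ j : Fin l, LegalityEdge L O (z j.castSucc) (z j.succ)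

/-- `Xr` is a removable set of type II with respect to the legal allocation `O`:
every player owns exactly one item of `Xr`, and the subgraph of the legality graph
induced on `Xr` is strongly connected. -/
def RemovableTypeII {X I : Type*} [Fintype I] [DecidableEq X]
    (L : I → Finset X) (O : I → Finset X) (Xr : Finset X) : Prop :=
  (∀ i, (O i ∩ Xr).card = 1) ∧
  (∀ x ∈ Xr, ∀ y ∈ Xr, PathInduced L O Xr x y)

/-!
At prices in `(0, 1)` a bundle `S` in demand for `i` consists of exactly `k i` legal items, none
dearer than a legal item outside `S`. If `S` meets `Xr` in an item `x`, then, the items of `Xr`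
being the dearest, `S` is `x` together with `O i \ Xr`; shifting the items of `Xr` backwards
along a loop-free path from `x` to the `Xr`-item of `i` in `G(O)` hands `x` to `i` and a legal
item of `Xr` to every other player. If `S` avoids `Xr` and `k i ≥ 2`, dropping its dearest item
`m` leaves a bundle in demand in the submarket, which `i` receives in some allocation `O'` of
the submarket. If `j` holds `m` in `O'`, shift `Xr` along a path from the `Xr`-item `y` of `j`
to that of `i`, except that `j` keeps `y` and hands `m` to `i`: then `j` holds two items of `Xr`
and `i` holds `S`. Bundles of a single item are handled by tightness.
-/

theorem Finset.sum_le_sum_of_card_le_of_forall_le {α M : Type*} [DecidableEq α]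
    [AddCommMonoid M] [LinearOrder M] [IsOrderedAddMonoid M] {s t : Finset α} {w : α → M}
    (hcard : t.card ≤ s.card) (hle : ∀ a ∈ t \ s, ∀ b ∈ s \ t, w a ≤ w b)
    (hnonneg : ∀ b ∈ s \ t, 0 ≤ w b) :
    ∑ a ∈ t, w a ≤ ∑ b ∈ s, w b := by
  rw [← sum_inter_add_sum_sdiff t s, ← sum_inter_add_sum_sdiff s t, inter_comm]
  refine add_le_add le_rfl ?_
  have hsdiff : (t \ s).card ≤ (s \ t).card := by
    have := card_sdiff_add_card_inter t s
    have := card_sdiff_add_card_inter s t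
    rw [inter_comm] at this
    omega
  rcases (s \ t).eq_empty_or_nonempty with hst | hst
  · rw [hst, card_empty, Nat.le_zero, card_eq_zero] at hsdiff
    simp [hsdiff, hst]
  obtain ⟨b₀, hb₀, hmin⟩ := exists_min_image (s \ t) w hst
  calc ∑ a ∈ t \ s, w a ≤ (t \ s).card • w b₀ :=
        sum_le_card_nsmul _ _ _ (hle · · b₀ hb₀)
    _ ≤ (s \ t).card • w b₀ := nsmul_le_nsmul_left (hnonneg b₀ hb₀) hsdiff
    _ ≤ ∑ b ∈ s \ t, w b := card_nsmul_le_sum _ _ _ hmin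

theorem Finset.card_inter_add_card_inter_univ_sdiff {X : Type*} [Fintype X] [DecidableEq X]
    (s t : Finset X) : (s ∩ t).card + (s ∩ (univ \ t)).card = s.card := by
  rw [← card_inter_add_card_sdiff s t]
  congr 2
  ext
  simp

theorem Equiv.Perm.apply_mem_iff_of_forall_notMem {X : Type*} {ρ : Equiv.Perm X} {s : Set X}
    (hρ : ∀ v ∉ s, ρ v = v) {v : X} : ρ v ∈ s ↔ v ∈ s := by
  refine ⟨fun h => ?_, fun h => ?_⟩
  · by_contra hv
    exact hv (hρ v hv ▸ h)
  · by_contra hv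
    exact hv (by rwa [ρ.injective (hρ _ hv)])

namespace List

variable {α : Type*} {r : α → α → Prop}

theorem exists_nodup_isChain_cons_of_reflTransGen {a b : α}
    (h : Relation.ReflTransGen r a b) :
    ∃ l : List α, (a :: l).Nodup ∧ (a :: l).IsChain r ∧
      (a :: l).getLast (cons_ne_nil a l) = b := by
  induction h using Relation.ReflTransGen.head_induction_on with
  | refl => exact ⟨[], nodup_singleton b, isChain_singleton b, rfl⟩
  | @head a c hac _ ih =>
    obtain ⟨l, hnd, hch, hlast⟩ := ih
    by_cases ha : a ∈ c :: l
    · obtain ⟨s, t, hst⟩ := append_of_mem ha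
      rw [hst] at hnd hch
      refine ⟨t, hnd.sublist (sublist_append_right s _), hch.right_of_append, ?_⟩
      simp only [← hlast, hst, getLast_append_of_ne_nil _ (cons_ne_nil a t)]
    · exact ⟨c :: l, nodup_cons.2 ⟨ha, hnd⟩, hch.cons_cons hac, by rwa [getLast_cons]⟩

theorem rel_formPerm_apply [DecidableEq α] {a u : α} {l : List α} (hnd : (a :: l).Nodup)
    (hch : (a :: l).IsChain r) (hu : (a :: l).formPerm u ≠ u)
    (hlast : u ≠ (a :: l).getLast (cons_ne_nil a l)) :
    r u ((a :: l).formPerm u) := by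
  obtain ⟨n, hn, rfl⟩ := getElem_of_mem (mem_of_formPerm_apply_ne hu)
  have hn1 : n + 1 < (a :: l).length := by
    by_contra! h
    exact hlast (by rw [getLast_eq_getElem]; congr 1; omega)
  rw [formPerm_apply_lt_getElem _ hnd n hn1]
  exact hch.getElem n hn1

end List

section Demand

variable {X : Type*} [DecidableEq X] {k : ℕ} {v p : X → ℝ} {S T : Finset X}

theorem sum_le_bundleValue (hTS : T ⊆ S) (hT : T.card ≤ k) :
    ∑ x ∈ T, v x ≤ bundleValue k v S :=
  le_max' _ _ <|
    mem_image_of_mem (fun T => ∑ x ∈ T, v x) (mem_filter.2 ⟨mem_powerset.2 hTS, hT⟩)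

theorem exists_subset_bundleValue_eq (k : ℕ) (v : X → ℝ) (S : Finset X) :
    ∃ T ⊆ S, T.card ≤ k ∧ bundleValue k v S = ∑ x ∈ T, v x := by
  obtain ⟨T, hT, hEq⟩ := mem_image.1 (max'_mem _ _ : bundleValue k v S ∈ _)
  rw [mem_filter, mem_powerset] at hT
  exact ⟨T, hT.1, hT.2, hEq.symm⟩

theorem bundleValue_eq_sum_s11 (hv : ∀ x, 0 ≤ v x) (hS : S.card ≤ k) :
    bundleValue k v S = ∑ x ∈ S, v x := by
  refine le_antisymm ?_ (sum_le_bundleValue subset_rfl hS)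
  obtain ⟨T, hTS, -, hEq⟩ := exists_subset_bundleValue_eq k v S
  exact hEq ▸ sum_le_sum_of_subset_of_nonneg hTS fun x _ _ => hv x

theorem exists_subset_bundleValue_sub_le (hp : ∀ x, 0 ≤ p x) (k : ℕ) (v : X → ℝ)
    (S : Finset X) :
    ∃ T ⊆ S, T.card ≤ k ∧
      bundleValue k v S - ∑ x ∈ S, p x ≤ ∑ x ∈ T, (v x - p x) := by
  obtain ⟨T, hTS, hTk, hEq⟩ := exists_subset_bundleValue_eq k v S
  refine ⟨T, hTS, hTk, ?_⟩
  rw [hEq, sum_sub_distrib]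
  linarith [sum_le_sum_of_subset_of_nonneg hTS fun x _ _ => hp x]

theorem InDemand.card_le (hv : ∀ x, 0 ≤ v x) (hp : ∀ x, 0 < p x) (hS : InDemand k v p S) :
    S.card ≤ k := by
  obtain ⟨T, hTS, hTk, hEq⟩ := exists_subset_bundleValue_eq k v S
  have hT := hS T
  rw [hEq, bundleValue_eq_sum_s11 hv hTk] at hT
  by_contra! hk
  obtain ⟨x, hxS, hxT⟩ :=
    exists_of_ssubset (ssubset_of_subset_of_ne hTS (by rintro rfl; omega))
  linarith [sum_lt_sum_of_subset hTS hxS hxT (hp x) fun y _ _ => (hp y).le]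

theorem InDemand.sum_sub_le (hv : ∀ x, 0 ≤ v x) (hS : InDemand k v p S) (hSk : S.card ≤ k)
    (hT : T.card ≤ k) : ∑ x ∈ T, (v x - p x) ≤ ∑ x ∈ S, (v x - p x) := by
  have := hS T
  rwa [bundleValue_eq_sum_s11 hv hT, bundleValue_eq_sum_s11 hv hSk, ← sum_sub_distrib,
    ← sum_sub_distrib] at this

theorem InDemand.sub_le_zero (hv : ∀ x, 0 ≤ v x) (hS : InDemand k v p S) (hSk : S.card < k)
    {y : X} (hy : y ∉ S) : v y - p y ≤ 0 := by
  have := hS.sum_sub_le hv hSk.le (T := insert y S) (by rw [card_insert_of_notMem hy]; omega)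
  rw [sum_insert hy] at this
  linarith

theorem InDemand.sub_le_sub (hv : ∀ x, 0 ≤ v x) (hS : InDemand k v p S) (hSk : S.card ≤ k)
    {x y : X} (hx : x ∈ S) (hy : y ∉ S) : v y - p y ≤ v x - p x := by
  have hy' : y ∉ S.erase x := fun h => hy (mem_of_mem_erase h)
  have := hS.sum_sub_le hv hSk (T := insert y (S.erase x))
    (by rwa [card_insert_of_notMem hy', card_erase_of_mem hx,
      Nat.sub_add_cancel (card_pos.2 ⟨x, hx⟩)])
  rw [sum_insert hy', ← add_sum_erase S _ hx] at this
  linarith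

theorem subInDemand_of_forall_sum_sub_le (hp : ∀ x, 0 ≤ p x) (hv : ∀ x, 0 ≤ v x)
    {XB C : Finset X} (hCB : C ⊆ XB) (hCk : C.card ≤ k)
    (hmax : ∀ T ⊆ XB, T.card ≤ k → ∑ x ∈ T, (v x - p x) ≤ ∑ x ∈ C, (v x - p x)) :
    SubInDemand XB k v p C := by
  refine ⟨hCB, fun S' hS' => ?_⟩
  obtain ⟨T, hTS, hTk, hle⟩ := exists_subset_bundleValue_sub_le hp k v S'
  rw [bundleValue_eq_sum_s11 hv hCk, ← sum_sub_distrib]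
  exact hle.trans (hmax T (hTS.trans hS') hTk)

end Demand

section SimpleValuation

variable {X I : Type*} [DecidableEq X] {L : I → Finset X} {i : I} {k : ℕ} {p : X → ℝ}
  {S : Finset X}

theorem simpVal_of_mem {x : X} (h : x ∈ L i) : simpVal L i x = 2 := if_pos h

theorem simpVal_of_notMem {x : X} (h : x ∉ L i) : simpVal L i x = 1 := if_neg h

theorem simpVal_nonneg (L : I → Finset X) (i : I) (x : X) : 0 ≤ simpVal L i x := by
  unfold simpVal
  split_ifs <;> norm_num

theorem InDemand.card_eq_of_simpVal (hp : ∀ x, 0 < p x ∧ p x < 1) (hkL : k ≤ (L i).card)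
    (hS : InDemand k (simpVal L i) p S) : S.card = k := by
  refine (hS.card_le (simpVal_nonneg L i) fun x => (hp x).1).antisymm
    (not_lt.1 fun hlt => ?_)
  obtain ⟨y, hyL, hyS⟩ := exists_mem_notMem_of_card_lt_card (hlt.trans_le hkL)
  have := hS.sub_le_zero (simpVal_nonneg L i) hlt hyS
  rw [simpVal_of_mem hyL] at this
  linarith [hp y]

theorem InDemand.subset_of_simpVal (hp : ∀ x, 0 < p x ∧ p x < 1) (hkL : k ≤ (L i).card)
    (hS : InDemand k (simpVal L i) p S) : S ⊆ L i := by
  have hSk := hS.card_eq_of_simpVal hp hkL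
  intro y hyS
  by_contra hyL
  obtain ⟨x, hxL, hxS⟩ := not_subset.1 fun hLS =>
    hyL (eq_of_subset_of_card_le hLS (hSk ▸ hkL) ▸ hyS)
  have := hS.sub_le_sub (simpVal_nonneg L i) hSk.le hyS hxS
  rw [simpVal_of_mem hxL, simpVal_of_notMem hyL] at this
  linarith [hp x, hp y]

theorem InDemand.price_le_of_simpVal (hp : ∀ x, 0 < p x ∧ p x < 1) (hkL : k ≤ (L i).card)
    (hS : InDemand k (simpVal L i) p S) {x y : X} (hx : x ∈ S) (hyL : y ∈ L i)
    (hyS : y ∉ S) : p x ≤ p y := by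
  have := hS.sub_le_sub (simpVal_nonneg L i) (hS.card_eq_of_simpVal hp hkL).le hx hyS
  rwa [simpVal_of_mem hyL, simpVal_of_mem (hS.subset_of_simpVal hp hkL hx),
    sub_le_sub_iff_left] at this

theorem subInDemand_simpVal_of_forall_price_le (hp : ∀ x, 0 < p x ∧ p x < 1)
    {XB C : Finset X} (hCB : C ⊆ XB) (hCL : C ⊆ L i)
    (hcheap : ∀ c ∈ C, ∀ y ∈ XB, y ∈ L i → y ∉ C → p c ≤ p y) :
    SubInDemand XB C.card (simpVal L i) p C := by
  refine subInDemand_of_forall_sum_sub_le (fun x => (hp x).1.le) (simpVal_nonneg L i) hCB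
    le_rfl fun T hTB hTk =>
      sum_le_sum_of_card_le_of_forall_le hTk (fun a ha c hc => ?_) fun c hc => ?_
  · rw [mem_sdiff] at ha hc
    rw [simpVal_of_mem (hCL hc.1)]
    by_cases haL : a ∈ L i
    · rw [simpVal_of_mem haL]
      linarith [hcheap c hc.1 a (hTB ha.1) haL ha.2]
    · rw [simpVal_of_notMem haL]
      linarith [hp a, hp c]
  · rw [simpVal_of_mem (hCL (mem_sdiff.1 hc).1)]
    linarith [hp c]

end SimpleValuation

section Allocation

variable {X I : Type*} {k : I → ℕ} {L O : I → Finset X} {Xr : Finset X}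

theorem PathInduced.reflTransGen_flip {a b : X} (h : PathInduced L O Xr a b) :
    Relation.ReflTransGen (fun u v => LegalityEdge L O v u ∧ v ∈ Xr) b a := by
  obtain ⟨n, z, hz, rfl, rfl, hedge⟩ := h
  suffices ∀ t : Fin (n + 1), Relation.ReflTransGen _ (z t) (z 0) from this _
  intro t
  induction t using Fin.induction with
  | zero => exact .refl
  | succ t ih => exact .head ⟨hedge t, hz _⟩ ih

theorem PathInduced.exists_perm [DecidableEq X] (hpart : ∀ x, ∃! j, x ∈ O j)
    (hOL : ∀ j, O j ⊆ L j) {a b : X} (h : PathInduced L O Xr a b) :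
    ∃ ρ : Equiv.Perm X, ρ a = b ∧ (∀ v ∉ Xr, ρ v = v) ∧
      ∀ v, v ≠ a → ∀ j, ρ v ∈ O j → v ∈ L j := by
  have hb : b ∈ Xr := by
    obtain ⟨n, z, hz, -, rfl, -⟩ := h
    exact hz _
  -- `ρ` is the cyclic shift along a loop-free path `b ← ⋯ ← a`, sending `a` back to `b`
  obtain ⟨l, hnd, hch, hlast⟩ :=
    List.exists_nodup_isChain_cons_of_reflTransGen h.reflTransGen_flip
  have hlXr : ∀ u ∈ b :: l, u ∈ Xr := hch.induction _ _ (fun _ _ h _ => h.2) fun _ => hb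
  refine ⟨(b :: l).formPerm, hlast ▸ List.formPerm_apply_getLast b l,
    fun v hv => List.formPerm_apply_of_notMem fun hmem => hv (hlXr v hmem), ?_⟩
  intro v hva j hv
  by_cases hfix : (b :: l).formPerm v = v
  · exact hOL j (hfix ▸ hv)
  · obtain ⟨j', hj', hvL, -⟩ := (List.rel_formPerm_apply hnd hch hfix (hlast ▸ hva)).1
    rwa [(hpart _).unique hv hj']

theorem LegalAlloc.perm [DecidableEq X] (hO : LegalAlloc k L O) (τ : Equiv.Perm X)
    (hτ : ∀ j v, τ v ∈ O j → v ∈ L j) :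
    LegalAlloc k L fun j => (O j).map τ.symm.toEmbedding :=
  ⟨fun j => by simp [hO.1 j], fun v => by simpa using hO.2.1 (τ v),
    fun j v hv => hτ j v (by simpa using hv)⟩

/-- Under `(swap a m).trans ρ` the item `a` goes to the owner `j` of `ρ m` and `m` to the owner
`i` of `ρ a`; every other item `v` goes to the owner of `ρ v`. -/
theorem LegalAlloc.perm_swap_trans [DecidableEq X] (hO : LegalAlloc k L O)
    {ρ : Equiv.Perm X} {a m : X} {i j : I}
    (hρL : ∀ v, v ≠ a → ∀ l, ρ v ∈ O l → v ∈ L l)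
    (hρa : ρ a ∈ O i) (hρm : ρ m ∈ O j) (ha : a ∈ L j) (hm : m ∈ L i) :
    LegalAlloc k L fun l => (O l).map ((Equiv.swap a m).trans ρ).symm.toEmbedding := by
  refine hO.perm _ fun l v hv => ?_
  by_cases hva : v = a
  · rw [hva, Equiv.trans_apply, Equiv.swap_apply_left] at hv
    rwa [hva, (hO.2.1 _).unique hv hρm]
  by_cases hvm : v = m
  · rw [hvm, Equiv.trans_apply, Equiv.swap_apply_right] at hv
    rwa [hvm, (hO.2.1 _).unique hv hρa]
  rw [Equiv.trans_apply, Equiv.swap_apply_of_ne_of_ne hva hvm] at hv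
  exact hρL v hva l hv

variable [Fintype X] [DecidableEq X]

theorem SubLegalAlloc.notMem_of_mem {O' : I → Finset X}
    (hO' : SubLegalAlloc L O (univ \ Xr) O') (j : I) {v : X} (hv : v ∈ Xr) : v ∉ O' j :=
  fun hv' => (mem_sdiff.1 (hO'.2.2.1 j hv')).2 hv

theorem LegalAlloc.inter_union (hO : LegalAlloc k L O) {O' : I → Finset X}
    (hO' : SubLegalAlloc L O (univ \ Xr) O') :
    LegalAlloc k L fun j => O j ∩ Xr ∪ O' j := by
  refine ⟨fun j => ?_, fun v => ?_,
    fun j => union_subset (inter_subset_left.trans (hO.2.2 j)) (hO'.2.2.2 j)⟩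
  · rw [card_union_of_disjoint
      (disjoint_right.2 fun v hv hv' => hO'.notMem_of_mem j (mem_inter.1 hv').2 hv),
      hO'.1 j, card_inter_add_card_inter_univ_sdiff, hO.1 j]
  · by_cases hv : v ∈ Xr
    · simpa [hv, hO'.notMem_of_mem _ hv] using hO.2.1 v
    · simpa [hv] using hO'.2.1 v (mem_sdiff.2 ⟨mem_univ v, hv⟩)

end Allocation

section RemovableSet

variable {X I : Type*} {k : I → ℕ} {L O : I → Finset X} {Xr S : Finset X} {i : I}
  {p : X → ℝ}

theorem exists_legalAlloc_of_card_eq_one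
    (htight : ∀ i, ∀ x ∈ L i, ∃ O : I → Finset X, LegalAlloc k L O ∧ x ∈ O i)
    (hk1 : k i = 1) (hS : S.card = k i) (hSL : S ⊆ L i) :
    ∃ O'' : I → Finset X, LegalAlloc k L O'' ∧ O'' i = S := by
  obtain ⟨x, rfl⟩ := card_eq_one.1 (hS.trans hk1)
  obtain ⟨O'', hO'', hx⟩ := htight i x (hSL (mem_singleton_self x))
  refine ⟨O'', hO'', (eq_of_subset_of_card_le (singleton_subset_iff.2 hx) ?_).symm⟩
  simp [hO''.1 i, hk1]

theorem inter_eq_singleton_and_sdiff_eq [DecidableEq X] (hOL : O i ⊆ L i)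
    (hone : (O i ∩ Xr).card = 1) (hS : S.card = (O i).card)
    (hcheap : ∀ x ∈ S, ∀ y ∈ L i, y ∉ S → p x ≤ p y)
    (hord : ∀ x ∈ Xr, ∀ y ∉ Xr, p y < p x) {x : X} (hx : x ∈ S ∩ Xr) :
    S ∩ Xr = {x} ∧ S \ Xr = O i \ Xr := by
  rw [mem_inter] at hx
  have hsub : O i \ Xr ⊆ S \ Xr := fun y hy => by
    rw [mem_sdiff] at hy ⊢
    refine ⟨by_contra fun hyS => ?_, hy.2⟩
    linarith [hcheap x hx.1 y (hOL hy.1) hyS, hord x hx.2 y hy.2]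
  have hcard := card_inter_add_card_sdiff S Xr
  have hcard' := card_inter_add_card_sdiff (O i) Xr
  have hpos : 0 < (S ∩ Xr).card := card_pos.2 ⟨x, mem_inter.2 hx⟩
  have := card_le_card hsub
  refine ⟨eq_singleton_iff_unique_mem.2 ⟨mem_inter.2 hx, fun z hz => ?_⟩,
    (eq_of_subset_of_card_le hsub (by omega)).symm⟩
  exact card_le_one.1 (by omega) z hz x (mem_inter.2 hx)

theorem exists_legalAlloc_of_inter_eq_singleton [DecidableEq X] (hO : LegalAlloc k L O)
    {x y : X} (hy : O i ∩ Xr = {y}) (hpath : PathInduced L O Xr x y) (hSL : S ⊆ L i)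
    (hSx : S ∩ Xr = {x}) (hSO : S \ Xr = O i \ Xr) :
    ∃ O'' : I → Finset X, LegalAlloc k L O'' ∧ O'' i = S := by
  obtain ⟨ρ, hρx, hρfix, hρL⟩ := hpath.exists_perm hO.2.1 hO.2.2
  have hxS : x ∈ S := mem_of_mem_inter_left (hSx ▸ mem_singleton_self x)
  have hρx' : ρ x ∈ O i := hρx ▸ mem_of_mem_inter_left (hy ▸ mem_singleton_self y)
  refine ⟨_, hO.perm_swap_trans hρL hρx' hρx' (hSL hxS) (hSL hxS), ?_⟩
  ext v
  rw [mem_map_equiv, Equiv.symm_symm, Equiv.swap_self, Equiv.refl_trans]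
  by_cases hv : v ∈ Xr
  · have hρv : ρ v ∈ Xr := (Equiv.Perm.apply_mem_iff_of_forall_notMem hρfix).2 hv
    have h1 : ρ v ∈ O i ↔ ρ v ∈ O i ∩ Xr := by simp [hρv]
    have h2 : v ∈ S ↔ v ∈ S ∩ Xr := by simp [hv]
    rw [h1, h2, hy, hSx, mem_singleton, mem_singleton, ← hρx, ρ.injective.eq_iff]
  · have h1 : v ∈ O i ↔ v ∈ O i \ Xr := by simp [hv]
    have h2 : v ∈ S ↔ v ∈ S \ Xr := by simp [hv]
    rw [hρfix v hv, h1, h2, hSO]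

theorem exists_subLegalAlloc_erase [DecidableEq X] (hp : ∀ x, 0 < p x ∧ p x < 1)
    {XB : Finset X}
    (hsub : (O i ∩ XB).Nonempty → ∀ C : Finset X,
      SubInDemand XB (O i ∩ XB).card (simpVal L i) p C →
      ∃ O' : I → Finset X, SubLegalAlloc L O XB O' ∧ O' i = C)
    (hne : (O i ∩ XB).Nonempty) (hSB : S ⊆ XB) (hSL : S ⊆ L i)
    (hcard : S.card = (O i ∩ XB).card + 1)
    (hcheap : ∀ x ∈ S, ∀ y ∈ L i, y ∉ S → p x ≤ p y) :
    ∃ m ∈ S, ∃ O' : I → Finset X, SubLegalAlloc L O XB O' ∧ O' i = S.erase m := by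
  obtain ⟨m, hm, hmax⟩ := exists_max_image S p (card_pos.1 (by omega))
  have hcheap' :
      ∀ c ∈ S.erase m, ∀ y ∈ XB, y ∈ L i → y ∉ S.erase m → p c ≤ p y := by
    intro c hc y _ hyL hyC
    by_cases hym : y = m
    · exact hym ▸ hmax c (mem_of_mem_erase hc)
    · exact hcheap c (mem_of_mem_erase hc) y hyL fun hyS => hyC (mem_erase.2 ⟨hym, hyS⟩)
  have hC := subInDemand_simpVal_of_forall_price_le hp ((erase_subset m S).trans hSB)
    ((erase_subset m S).trans hSL) hcheap'
  rw [card_erase_of_mem hm, hcard, add_tsub_cancel_right] at hC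
  exact ⟨m, hm, hsub hne _ hC⟩

theorem exists_legalAlloc_of_disjoint [Fintype X] [DecidableEq X] (hO : LegalAlloc k L O)
    {O' : I → Finset X} {j : I} {m yi yj : X} (hyi : O i ∩ Xr = {yi})
    (hyj : O j ∩ Xr = {yj}) (hpath : PathInduced L O Xr yj yi)
    (hO' : SubLegalAlloc L O (univ \ Xr) O') (hO'i : O' i = S.erase m) (hmj : m ∈ O' j)
    (hmS : m ∈ S) (hSL : S ⊆ L i) (hSXr : Disjoint S Xr) :
    ∃ O'' : I → Finset X, LegalAlloc k L O'' ∧ O'' i = S := by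
  obtain ⟨ρ, hρy, hρfix, hρL⟩ := hpath.exists_perm hO.2.1 hO.2.2
  have hmXr : m ∉ Xr := disjoint_left.1 hSXr hmS
  have hyiO : yi ∈ O i ∩ Xr := hyi ▸ mem_singleton_self yi
  have hyjO : yj ∈ O j ∩ Xr := hyj ▸ mem_singleton_self yj
  have hXr : ∀ u ∈ Xr, ∀ l, u ∈ O l ∩ Xr ∪ O' l ↔ u ∈ O l := fun u hu l => by
    simp [hu, hO'.notMem_of_mem l hu]
  have hXB : ∀ u ∉ Xr, ∀ l, u ∈ O l ∩ Xr ∪ O' l ↔ u ∈ O' l := fun u hu l => by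
    simp [hu]
  have hρL' : ∀ v, v ≠ yj → ∀ l, ρ v ∈ O l ∩ Xr ∪ O' l → v ∈ L l := by
    intro v hvj l hv
    by_cases hv' : v ∈ Xr
    · rw [hXr _ ((Equiv.Perm.apply_mem_iff_of_forall_notMem hρfix).2 hv')] at hv
      exact hρL v hvj l hv
    · rw [hρfix v hv', hXB v hv'] at hv
      exact hO'.2.2.2 l hv
  refine ⟨_, (hO.inter_union hO').perm_swap_trans hρL' (hρy ▸ mem_union_left _ hyiO)
    ((hρfix m hmXr).symm ▸ mem_union_right _ hmj) (hO.2.2 j (mem_of_mem_inter_left hyjO))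
    (hSL hmS), ?_⟩
  ext v
  rw [mem_map_equiv, Equiv.symm_symm, Equiv.trans_apply]
  by_cases hvj : v = yj
  · rw [hvj, Equiv.swap_apply_left, hρfix m hmXr, hXB m hmXr, hO'i]
    simp [disjoint_left.1 hSXr.symm (mem_of_mem_inter_right hyjO)]
  by_cases hvm : v = m
  · rw [hvm, Equiv.swap_apply_right, hρy, hXr yi (mem_of_mem_inter_right hyiO)]
    simp [hmS, mem_of_mem_inter_left hyiO]
  rw [Equiv.swap_apply_of_ne_of_ne hvj hvm]
  by_cases hv' : v ∈ Xr
  · have hρv := (Equiv.Perm.apply_mem_iff_of_forall_notMem hρfix).2 hv'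
    rw [hXr _ hρv]
    refine iff_of_false (fun h => hvj (ρ.injective ?_)) fun h => disjoint_left.1 hSXr h hv'
    rw [hρy, ← mem_singleton, ← hyi]
    exact mem_inter.2 ⟨h, hρv⟩
  · rw [hρfix v hv', hXB v hv', hO'i, mem_erase]
    simp [hvm]

end RemovableSet

theorem dynamic_pricing_of_removable_set_type_II_general
    {X I : Type*} [Fintype X] [DecidableEq X] [Fintype I]
    (k : I → ℕ)
    (L : I → Finset X)
    (htight : ∀ i, ∀ x ∈ L i, ∃ O : I → Finset X, LegalAlloc k L O ∧ x ∈ O i)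
    (O : I → Finset X) (hO : LegalAlloc k L O)
    (Xr : Finset X) (hXr : RemovableTypeII L O Xr)
    (p : X → ℝ) (hp : ∀ x, 0 < p x ∧ p x < 1)
    (hord : ∀ x ∈ Xr, ∀ y ∉ Xr, p y < p x)
    (hsub : ∀ i, (O i ∩ (Finset.univ \ Xr)).Nonempty →
      ∀ S : Finset X,
        SubInDemand (Finset.univ \ Xr) ((O i ∩ (Finset.univ \ Xr)).card)
          (simpVal L i) p S →
        ∃ O' : I → Finset X, SubLegalAlloc L O (Finset.univ \ Xr) O' ∧ O' i = S) :
    ∀ i, ∀ S : Finset X, InDemand (k i) (simpVal L i) p S →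
      ∃ O'' : I → Finset X, LegalAlloc k L O'' ∧ O'' i = S := by
  intro i S hS
  obtain ⟨hone, hconn⟩ := hXr
  choose y hy using fun j => card_eq_one.1 (hone j)
  have hyXr : ∀ j, y j ∈ Xr := fun j => mem_of_mem_inter_right (hy j ▸ mem_singleton_self _)
  have hkL : k i ≤ (L i).card := hO.1 i ▸ card_le_card (hO.2.2 i)
  have hSk := hS.card_eq_of_simpVal hp hkL
  have hSL := hS.subset_of_simpVal hp hkL
  have hcheap : ∀ x ∈ S, ∀ y ∈ L i, y ∉ S → p x ≤ p y :=
    fun _ hx _ => hS.price_le_of_simpVal hp hkL hx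
  rcases disjoint_or_nonempty_inter S Xr with hSXr | ⟨x, hx⟩
  · obtain hk1 | hk := eq_or_ne (k i) 1
    · exact exists_legalAlloc_of_card_eq_one htight hk1 hSk hSL
    have hSB : S ⊆ univ \ Xr := subset_sdiff.2 ⟨subset_univ S, hSXr⟩
    have hcard := card_inter_add_card_inter_univ_sdiff (O i) Xr
    rw [hone i, hO.1 i] at hcard
    obtain ⟨m, hmS, O', hO', hO'i⟩ := exists_subLegalAlloc_erase hp (hsub i)
      (card_pos.1 (by omega)) hSB hSL (by omega) hcheap
    obtain ⟨j, hmj, -⟩ := hO'.2.1 m (hSB hmS)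
    exact exists_legalAlloc_of_disjoint hO (hy i) (hy j) (hconn _ (hyXr j) _ (hyXr i)) hO'
      hO'i hmj hmS hSL hSXr
  · obtain ⟨hSx, hSO⟩ := inter_eq_singleton_and_sdiff_eq (hO.2.2 i) (hone i)
      (hSk.trans (hO.1 i).symm) hcheap hord hx
    exact exists_legalAlloc_of_inter_eq_singleton hO (hy i)
      (hconn x (mem_of_mem_inter_right hx) _ (hyXr i)) hSL hSx hSO

/-- Pricing lemma for a removable set of type II: price the items of the removable
set highest and use a dynamic pricing of the submarket on the remaining items; the
result is a dynamic pricing of the market. -/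
theorem dynamic_pricing_of_removable_set_type_II
    {X I : Type*} [Fintype X] [DecidableEq X] [Fintype I] [DecidableEq I]
    (k : I → ℕ) (hk : ∀ i, 1 ≤ k i) (hsum : ∑ i, k i = Fintype.card X)
    (hI : 2 ≤ Fintype.card I)
    (L : I → Finset X)
    (htight : ∀ i, ∀ x ∈ L i, ∃ O : I → Finset X, LegalAlloc k L O ∧ x ∈ O i)
    (O : I → Finset X) (hO : LegalAlloc k L O)
    (Xr : Finset X) (hXr : RemovableTypeII L O Xr)
    (p : X → ℝ) (hp : ∀ x, 0 < p x ∧ p x < 1)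
    (hord : ∀ x ∈ Xr, ∀ y ∉ Xr, p y < p x)
    (hsub : ∀ i, (O i ∩ (Finset.univ \ Xr)).Nonempty →
      ∀ S : Finset X,
        SubInDemand (Finset.univ \ Xr) ((O i ∩ (Finset.univ \ Xr)).card)
          (simpVal L i) p S →
        ∃ O' : I → Finset X, SubLegalAlloc L O (Finset.univ \ Xr) O' ∧ O' i = S) :
    ∀ i, ∀ S : Finset X, InDemand (k i) (simpVal L i) p S →
      ∃ O'' : I → Finset X, LegalAlloc k L O'' ∧ O'' i = S :=
  dynamic_pricing_of_removable_set_type_II_general k L htight O hO Xr hXr p hp hord hsub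
end
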